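/- Let m ≥ 1. The map π : W_{m+1,m+3}(ℝP^m) → W_{m+1,m+2}(ℝP^m) defined by π(p_1,...,p_{m+2},p_{m+3}) = (p_1,...,p_{m+2}) is a locally trivial fiber bundle with fiber ℝP^m − Q_{m,m+2}(ℝP^m)_q, where q = ([e_1],...,[e_{m+1}],[e_1+...+e_{m+1}]); that is, every point of the base has an open neighborhood U admitting a homeomorphism π^{-1}(U) ≅ U × (ℝP^m − Q_{m,m+2}(ℝP^m)_q) over U. -/

import Mathlib

open scoped LinearAlgebra.Projectivization

noncomputable section

instance projTopology {K V : Type*} [DivisionRing K] [AddCommGroup V] [Module K V]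
    [TopologicalSpace V] : TopologicalSpace (ℙ K V) :=
  inferInstanceAs (TopologicalSpace (Quotient _))

/-- The generalized configuration space `W_{k,n}(ℙ V)` of `n`-tuples of points of projective
space such that any `k` of the entries are linearly independent. -/
def genConfigP (K V : Type*) [DivisionRing K] [AddCommGroup V] [Module K V] (k n : ℕ) :
    Set (Fin n → ℙ K V) :=
  {p | ∀ s : Finset (Fin n), s.card = k → Projectivization.Independent (fun i : s => p i.val)}

/-- `Q_{j,n}(ℙ V)_p`: the set of points `x` of projective space such that for some `j`-element
subset `{i_1,...,i_j} ⊆ {1,...,n}` the points `x, p_{i_1}, ..., p_{i_j}` are linearly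
dependent. -/
def QSetP {K V : Type*} [DivisionRing K] [AddCommGroup V] [Module K V] (j n : ℕ)
    (p : Fin n → ℙ K V) : Set (ℙ K V) :=
  {x | ∃ s : Finset (Fin n), s.card = j ∧
    ¬ Projectivization.Independent (fun o : Option s => Option.elim o x (fun i => p i.val))}

lemma forget_memP {K V : Type*} [DivisionRing K] [AddCommGroup V] [Module K V] {k n : ℕ}
    {x : Fin (n + 1) → ℙ K V} (hx : x ∈ genConfigP K V k (n + 1)) :
    (fun i : Fin n => x i.castSucc) ∈ genConfigP K V k n := by
  intro s hs
  have h2 := hx (s.map Fin.castSuccEmb) (by rwa [Finset.card_map])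
  rw [Projectivization.independent_iff] at h2 ⊢
  have h3 : (Projectivization.rep ∘ fun i : s => x (i.val.castSucc)) =
      (Projectivization.rep ∘ fun j : (s.map Fin.castSuccEmb) => x j.val) ∘
        (fun i : s => (⟨Fin.castSucc i.val, Finset.mem_map_of_mem _ i.2⟩ :
          (s.map Fin.castSuccEmb : Finset (Fin (n + 1))))) := rfl
  rw [h3]
  exact h2.comp _ fun a b hab => by
    apply Subtype.ext
    exact Fin.castSucc_injective _ (congrArg Subtype.val hab)

/-- The projection `W_{k,n+1}(ℙ V) → W_{k,n}(ℙ V)` forgetting the last entry of a tuple. -/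
def forgetLastP {K V : Type*} [DivisionRing K] [AddCommGroup V] [Module K V]
    [TopologicalSpace V] {k n : ℕ} (x : genConfigP K V k (n + 1)) : genConfigP K V k n :=
  ⟨fun i => x.val i.castSucc, forget_memP x.prop⟩

lemma single_ne_zero' {m : ℕ} (i : Fin (m + 1)) :
    (EuclideanSpace.single i (1 : ℝ)) ≠ 0 := by
  intro h
  have := congrArg norm h
  simp [EuclideanSpace.norm_single] at this

lemma sum_single_ne_zero' (m : ℕ) :
    ((∑ j, EuclideanSpace.single j (1 : ℝ)) : EuclideanSpace ℝ (Fin (m + 1))) ≠ 0 := by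
  intro h
  have h2 : ((∑ j, EuclideanSpace.single j (1 : ℝ)) : EuclideanSpace ℝ (Fin (m + 1))) 0
      = ∑ j : Fin (m + 1), (EuclideanSpace.single j (1 : ℝ)) 0 := by
    rw [WithLp.ofLp_sum]; exact Finset.sum_apply _ _ _
  rw [h] at h2
  simp [EuclideanSpace.single_apply] at h2

/-- The base point `q = ([e_1],...,[e_{m+1}],[e_1+...+e_{m+1}])` of `W_{m+1,m+2}(ℝP^m)`. -/
def qBase (m : ℕ) : Fin (m + 2) → ℙ ℝ (EuclideanSpace ℝ (Fin (m + 1))) :=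
  Fin.snoc (fun i : Fin (m + 1) =>
      Projectivization.mk ℝ (EuclideanSpace.single i 1) (single_ne_zero' i))
    (Projectivization.mk ℝ (∑ j, EuclideanSpace.single j 1) (sum_single_ne_zero' m))

namespace Proj9

open Projectivization Topology Matrix

variable {V : Type*} [NormedAddCommGroup V] [NormedSpace ℝ V]

lemma continuous_mkP : Continuous (Projectivization.mk' ℝ : {v : V // v ≠ 0} → ℙ ℝ V) :=
  continuous_quotient_mk'

lemma isQuotientMap_mkP :
    IsQuotientMap (Projectivization.mk' ℝ : {v : V // v ≠ 0} → ℙ ℝ V) :=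
  isQuotientMap_quotient_mk'

lemma isOpenMap_mkP : IsOpenMap (Projectivization.mk' ℝ : {v : V // v ≠ 0} → ℙ ℝ V) := by
  intro S hS
  rw [← isQuotientMap_mkP.isOpen_preimage]
  have hne : IsOpen {v : V | v ≠ 0} := isOpen_ne
  have hval : IsOpen (Subtype.val '' S : Set V) := hne.isOpenMap_subtype_val S hS
  have : Projectivization.mk' ℝ ⁻¹' (Projectivization.mk' ℝ '' S) =
      ⋃ a : ℝˣ, (fun v : {v : V // v ≠ 0} => a • (v : V)) ⁻¹' (Subtype.val '' S) := by
    ext v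
    simp only [Set.mem_preimage, Set.mem_image, Set.mem_iUnion]
    constructor
    · rintro ⟨w, hwS, hw⟩
      rw [mk'_eq_mk, mk'_eq_mk, mk_eq_mk_iff] at hw
      obtain ⟨a, ha⟩ := hw
      exact ⟨a, w, hwS, ha.symm⟩
    · rintro ⟨a, w, hwS, ha⟩
      refine ⟨w, hwS, ?_⟩
      rw [mk'_eq_mk, mk'_eq_mk, mk_eq_mk_iff]
      exact ⟨a, ha.symm⟩
  rw [this]
  exact isOpen_iUnion fun a =>
    ((continuous_subtype_val.const_smul (a : ℝ)).isOpen_preimage _ hval)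

lemma isOpenQuotientMap_mkP :
    IsOpenQuotientMap (Projectivization.mk' ℝ : {v : V // v ≠ 0} → ℙ ℝ V) :=
  ⟨Quotient.mk''_surjective, continuous_mkP, isOpenMap_mkP⟩

/-- A scale-invariant "section" of the projectivization associated to a functional. -/
def secf (ψ : V →L[ℝ] ℝ) : ℙ ℝ V → V :=
  Projectivization.lift (fun w => (ψ w.val)⁻¹ • w.val) (by
    rintro ⟨a, ha⟩ ⟨b, hb⟩ t h
    simp only at h
    subst h
    have ht : t ≠ 0 := by rintro rfl; simp at ha
    simp only [_root_.map_smul, smul_eq_mul, smul_smul, _root_.mul_inv_rev]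
    congr 1
    rcases eq_or_ne (ψ b) 0 with hb0 | hb0
    · simp [hb0]
    · field_simp)

lemma secf_mk (ψ : V →L[ℝ] ℝ) (v : V) (hv : v ≠ 0) :
    secf ψ (Projectivization.mk ℝ v hv) = (ψ v)⁻¹ • v := rfl

lemma secf_rep (ψ : V →L[ℝ] ℝ) (x : ℙ ℝ V) : secf ψ x = (ψ x.rep)⁻¹ • x.rep := by
  conv_lhs => rw [← mk_rep x]
  rfl

lemma secf_ne_zero {ψ : V →L[ℝ] ℝ} {x : ℙ ℝ V} (h : ψ x.rep ≠ 0) : secf ψ x ≠ 0 := by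
  rw [secf_rep]
  exact smul_ne_zero (inv_ne_zero h) (rep_nonzero x)

lemma mk_secf {ψ : V →L[ℝ] ℝ} {x : ℙ ℝ V} (h : ψ x.rep ≠ 0) :
    Projectivization.mk ℝ (secf ψ x) (secf_ne_zero h) = x := by
  conv_rhs => rw [← mk_rep x]
  rw [mk_eq_mk_iff']
  exact ⟨(ψ x.rep)⁻¹, (secf_rep ψ x).symm⟩

/-- The affine chart domain where the functional does not vanish. -/
def Dset (ψ : V →L[ℝ] ℝ) : Set (ℙ ℝ V) := {x | ψ x.rep ≠ 0}

lemma dset_mk {ψ : V →L[ℝ] ℝ} {v : V} (hv : v ≠ 0) :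
    Projectivization.mk ℝ v hv ∈ Dset ψ ↔ ψ v ≠ 0 := by
  obtain ⟨a, ha⟩ := exists_smul_eq_mk_rep ℝ v hv
  have : ψ (Projectivization.mk ℝ v hv).rep = a * ψ v := by
    rw [← ha]; simp [Units.smul_def]
  simp only [Dset, Set.mem_setOf_eq, this, mul_ne_zero_iff]
  exact ⟨fun h => h.2, fun h => ⟨a.ne_zero, h⟩⟩

lemma isOpen_Dset (ψ : V →L[ℝ] ℝ) : IsOpen (Dset ψ) := by
  rw [← isQuotientMap_mkP.isOpen_preimage]
  have : Projectivization.mk' ℝ ⁻¹' Dset ψ = {v : {v : V // v ≠ 0} | ψ v.val ≠ 0} := by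
    ext v
    rw [Set.mem_preimage, mk'_eq_mk, dset_mk v.2]
    rfl
  rw [this]
  exact isOpen_compl_iff.mpr (isClosed_eq (ψ.continuous.comp continuous_subtype_val)
    continuous_const)

lemma continuousAt_secf (ψ : V →L[ℝ] ℝ) {x₀ : ℙ ℝ V} (h : x₀ ∈ Dset ψ) :
    ContinuousAt (secf ψ) x₀ := by
  have hx : x₀ = Projectivization.mk' ℝ ⟨x₀.rep, rep_nonzero x₀⟩ := by
    rw [mk'_eq_mk, mk_rep]
  rw [hx, ← isOpenQuotientMap_mkP.continuousAt_comp_iff]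
  have : (secf ψ ∘ Projectivization.mk' ℝ) = fun v : {v : V // v ≠ 0} =>
      (ψ v.val)⁻¹ • v.val := rfl
  rw [this]
  exact (((ψ.continuous.comp continuous_subtype_val).continuousAt).inv₀ h).smul
    continuous_subtype_val.continuousAt

lemma continuous_mk_of {X : Type*} [TopologicalSpace X] (F : X → V) (hF : Continuous F)
    (h0 : ∀ x, F x ≠ 0) : Continuous (fun x => Projectivization.mk ℝ (F x) (h0 x)) :=
  continuous_mkP.comp (hF.subtype_mk h0)

lemma continuousAt_mk_local {X : Type*} [TopologicalSpace X] {S : Set X} (hS : IsOpen S)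
    {x₀ : X} (hx : x₀ ∈ S) {G : X → V} (hG : ContinuousOn G S) (h0 : ∀ x ∈ S, G x ≠ 0)
    {f : X → ℙ ℝ V} (hf : ∀ x (hxS : x ∈ S), f x = Projectivization.mk ℝ (G x) (h0 x hxS)) :
    ContinuousAt f x₀ := by
  have hcOn : ContinuousOn f S := by
    rw [continuousOn_iff_continuous_restrict]
    have h2 : S.restrict f = fun x : S => Projectivization.mk ℝ (G x.val) (h0 _ x.2) :=
      funext fun x => hf x.val x.2
    refine (congrArg Continuous h2).mpr ?_
    exact continuous_mk_of _ hG.restrict _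
  exact hcOn.continuousAt (hS.mem_nhds hx)


section Indep

variable {K W : Type*} [Field K] [AddCommGroup W] [Module K W]

lemma linearIndependent_iff_scale {ι : Type*} {g h : ι → W}
    (hgh : ∀ i, ∃ a : Kˣ, g i = a • h i) :
    LinearIndependent K g ↔ LinearIndependent K h := by
  choose a ha using hgh
  constructor
  · intro hg
    have h2 : h = (fun i => (a i)⁻¹ • g i) := funext fun i => by
      rw [ha i, inv_smul_smul]
    rw [h2]
    exact hg.units_smul _
  · intro hh
    have h2 : g = (fun i => a i • h i) := funext ha
    rw [h2]
    exact hh.units_smul _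

lemma independent_iff_of_reps {ι : Type*} {P : ι → ℙ K W} {g : ι → W} (hg : ∀ i, g i ≠ 0)
    (h : ∀ i, P i = Projectivization.mk K (g i) (hg i)) :
    Projectivization.Independent P ↔ LinearIndependent K g := by
  rw [independent_iff]
  apply linearIndependent_iff_scale
  intro i
  obtain ⟨a, ha⟩ := exists_smul_eq_mk_rep K (g i) (hg i)
  refine ⟨a, ?_⟩
  rw [Function.comp_apply, h i, ← ha]

lemma linearIndependent_equiv_map {ι : Type*} {W₂ : Type*} [AddCommGroup W₂] [Module K W₂]
    (e : W ≃ₗ[K] W₂) {g : ι → W} :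
    LinearIndependent K (fun i => e (g i)) ↔ LinearIndependent K g := by
  constructor
  · intro h
    have := h.map' e.symm.toLinearMap (LinearMap.ker_eq_bot.mpr e.symm.injective)
    have h2 : (⇑e.symm.toLinearMap ∘ fun i => e (g i)) = g := funext fun i => e.symm_apply_apply (g i)
    rwa [h2] at this
  · intro h
    exact h.map' e.toLinearMap (LinearMap.ker_eq_bot.mpr e.injective)


lemma independent_comp {ι κ : Type*} {f : κ → ℙ K W} (h : Projectivization.Independent f)
    (e : ι → κ) (he : Function.Injective e) :
    Projectivization.Independent fun i => f (e i) := by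
  rw [independent_iff] at h ⊢
  exact h.comp e he

end Indep


section Main

variable {m : ℕ}

/-- Shorthand for the ambient Euclidean space. -/
abbrev Vm (m : ℕ) := EuclideanSpace ℝ (Fin (m + 1))

lemma toEuclideanLin_coord {k : ℕ} (M : Matrix (Fin k) (Fin k) ℝ)
    (v : EuclideanSpace ℝ (Fin k)) (j : Fin k) :
    Matrix.toEuclideanLin M v j = ∑ i, M j i * v i := by
  rw [Matrix.toEuclideanLin_apply]
  rfl

lemma toEuclideanLin_mul_apply {k : ℕ} (A B : Matrix (Fin k) (Fin k) ℝ)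
    (v : EuclideanSpace ℝ (Fin k)) :
    Matrix.toEuclideanLin A (Matrix.toEuclideanLin B v) = Matrix.toEuclideanLin (A * B) v := by
  rw [Matrix.toEuclideanLin_apply, Matrix.toEuclideanLin_apply, Matrix.toEuclideanLin_apply,
    WithLp.ofLp_toLp, Matrix.mulVec_mulVec]

lemma toEuclideanLin_one {k : ℕ} (v : EuclideanSpace ℝ (Fin k)) :
    Matrix.toEuclideanLin (1 : Matrix (Fin k) (Fin k) ℝ) v = v := by
  rw [Matrix.toEuclideanLin_apply, Matrix.one_mulVec]

variable (qt : Fin (m + 2) → ℙ ℝ (Vm m))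

/-- The functional associated to the `i`-th entry of the base point. -/
def phiF (i : Fin (m + 2)) : Vm m →L[ℝ] ℝ := innerSL ℝ ((qt i).rep)

/-- The open neighborhood in the space of tuples. -/
def UsetQ : Set (Fin (m + 2) → ℙ ℝ (Vm m)) := {p | ∀ i, p i ∈ Dset (phiF qt i)}

lemma isOpen_UsetQ : IsOpen (UsetQ qt) := by
  have h : UsetQ qt = ⋂ i, (fun p : Fin (m + 2) → ℙ ℝ (Vm m) => p i) ⁻¹' Dset (phiF qt i) := by
    ext p
    simp [UsetQ, Set.mem_iInter]
  rw [h]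
  exact isOpen_iInter_of_finite fun i => (isOpen_Dset _).preimage (continuous_apply i)

lemma mem_UsetQ_self : qt ∈ UsetQ qt := by
  intro i
  have : phiF qt i ((qt i).rep) ≠ 0 := by
    simp only [phiF, innerSL_apply_apply]
    exact inner_self_ne_zero.mpr (rep_nonzero _)
  exact this

variable (p : Fin (m + 2) → ℙ ℝ (Vm m))

/-- Chosen representative vectors for the entries of `p`. -/
def vv (i : Fin (m + 2)) : Vm m := secf (phiF qt i) (p i)

/-- The matrix whose columns are the first `m+1` representatives. -/
def Bm : Matrix (Fin (m + 1)) (Fin (m + 1)) ℝ := Matrix.of fun j i => vv qt p i.castSucc j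

/-- Coordinates of the representative of the last entry. -/
def wv : Fin (m + 1) → ℝ := fun j => vv qt p (Fin.last (m + 1)) j

/-- Coefficients of the last representative in terms of the first `m+1`. -/
def cv : Fin (m + 1) → ℝ := (Bm qt p).det⁻¹ • (Bm qt p).cramer (wv qt p)

/-- The matrix with columns `c_i • v_i`. -/
def Mm : Matrix (Fin (m + 1)) (Fin (m + 1)) ℝ := Bm qt p * Matrix.diagonal (cv qt p)

/-- The inverse of `Mm`. -/
def Nm : Matrix (Fin (m + 1)) (Fin (m + 1)) ℝ := (Mm qt p).det⁻¹ • (Mm qt p).adjugate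

/-- The linear map transporting the standard frame to representatives of `p`. -/
def Tl : Vm m →ₗ[ℝ] Vm m := Matrix.toEuclideanLin (Mm qt p)

/-- Its inverse. -/
def Ti : Vm m →ₗ[ℝ] Vm m := Matrix.toEuclideanLin (Nm qt p)

lemma vv_ne_zero (hp : p ∈ UsetQ qt) (i : Fin (m + 2)) : vv qt p i ≠ 0 :=
  secf_ne_zero (hp i)

lemma mk_vv (hp : p ∈ UsetQ qt) (i : Fin (m + 2)) :
    Projectivization.mk ℝ (vv qt p i) (vv_ne_zero qt p hp i) = p i := mk_secf (hp i)

lemma Bm_det_ne_zero (hp : p ∈ UsetQ qt) (hcfg : p ∈ genConfigP ℝ (Vm m) (m + 1) (m + 2)) :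
    (Bm qt p).det ≠ 0 := by
  set s : Finset (Fin (m + 2)) := Finset.univ.map Fin.castSuccEmb with hs
  have hscard : s.card = m + 1 := by simp [hs]
  have h1 := hcfg s hscard
  have h2 : LinearIndependent ℝ (fun i : s => vv qt p i.val) := by
    rw [← independent_iff_of_reps (fun i : s => vv_ne_zero qt p hp i.val)
      (fun i => (mk_vv qt p hp i.val).symm)]
    exact h1
  have h3 : LinearIndependent ℝ (fun i : Fin (m + 1) => vv qt p i.castSucc) := by
    have h4 := h2.comp
      (fun i : Fin (m + 1) => (⟨i.castSucc, Finset.mem_map_of_mem _ (Finset.mem_univ i)⟩ : s))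
      (fun a b hab => Fin.castSucc_injective _ (congrArg Subtype.val hab))
    exact h4
  have h5 : LinearIndependent ℝ (fun i : Fin (m + 1) => (Bm qt p)ᵀ i) := by
    have he : (fun i : Fin (m + 1) => (Bm qt p)ᵀ i) =
        fun i => (WithLp.linearEquiv 2 ℝ (Fin (m + 1) → ℝ)) (vv qt p i.castSucc) :=
      funext fun i => rfl
    rw [he, linearIndependent_equiv_map]
    exact h3
  have h6 : IsUnit (Bm qt p) := Matrix.linearIndependent_cols_iff_isUnit.mp h5
  exact isUnit_iff_ne_zero.mp ((Matrix.isUnit_iff_isUnit_det _).mp h6)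

lemma Bm_mulVec_cv (hp : p ∈ UsetQ qt) (hcfg : p ∈ genConfigP ℝ (Vm m) (m + 1) (m + 2)) :
    Bm qt p *ᵥ cv qt p = wv qt p := by
  have hd := Bm_det_ne_zero qt p hp hcfg
  rw [cv, Matrix.mulVec_smul, Matrix.mulVec_cramer, smul_smul, inv_mul_cancel₀ hd, one_smul]

lemma sum_cv_vv (hp : p ∈ UsetQ qt) (hcfg : p ∈ genConfigP ℝ (Vm m) (m + 1) (m + 2)) :
    ∑ k, cv qt p k • vv qt p k.castSucc = vv qt p (Fin.last (m + 1)) := by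
  have h := congrFun (Bm_mulVec_cv qt p hp hcfg)
  ext j
  have h2 : (∑ k, cv qt p k • vv qt p k.castSucc) j
      = ∑ k, cv qt p k * vv qt p k.castSucc j := by
    rw [WithLp.ofLp_sum, Finset.sum_apply]
    rfl
  rw [h2]
  have h3 := h j
  rw [Matrix.mulVec] at h3
  simp only [dotProduct, Bm, Matrix.of_apply] at h3
  have h4 : vv qt p (Fin.last (m + 1)) j = wv qt p j := rfl
  rw [h4, ← h3]
  exact Finset.sum_congr rfl fun k _ => mul_comm _ _

lemma cv_ne_zero (hp : p ∈ UsetQ qt) (hcfg : p ∈ genConfigP ℝ (Vm m) (m + 1) (m + 2))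
    (i : Fin (m + 1)) : cv qt p i ≠ 0 := by
  intro hci
  set s' : Finset (Fin (m + 2)) :=
    insert (Fin.last (m + 1)) ((Finset.univ.erase i).map Fin.castSuccEmb) with hs'
  have hlast : Fin.last (m + 1) ∉ (Finset.univ.erase i).map Fin.castSuccEmb := by
    simp only [Finset.mem_map]
    rintro ⟨k, _, hkk⟩
    exact (Fin.castSucc_lt_last k).ne hkk
  have hcard : s'.card = m + 1 := by
    rw [hs', Finset.card_insert_of_notMem hlast, Finset.card_map,
      Finset.card_erase_of_mem (Finset.mem_univ i)]
    simp
  have h1 := hcfg s' hcard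
  have h2 : LinearIndependent ℝ (fun j : s' => vv qt p j.val) := by
    rw [← independent_iff_of_reps (fun j : s' => vv_ne_zero qt p hp j.val)
      (fun j => (mk_vv qt p hp j.val).symm)]
    exact h1
  set G : Fin (m + 2) → ℝ := Fin.snoc (cv qt p) (-1) with hG
  have hsum0 : ∑ j : s', G j.val • vv qt p j.val = 0 := by
    rw [Finset.sum_coe_sort s' (fun j => G j • vv qt p j)]
    rw [hs', Finset.sum_insert hlast, Finset.sum_map]
    have h5 : ∀ k ∈ Finset.univ.erase i,
        G (Fin.castSuccEmb k) • vv qt p (Fin.castSuccEmb k)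
          = cv qt p k • vv qt p k.castSucc := by
      intro k _
      have : G (Fin.castSuccEmb k) = cv qt p k := by
        rw [hG]
        exact Fin.snoc_castSucc _ _ _
      rw [this]
      rfl
    rw [Finset.sum_congr rfl h5]
    rw [Finset.sum_erase _ (by rw [hci, zero_smul])]
    rw [sum_cv_vv qt p hp hcfg]
    have h6 : G (Fin.last (m + 1)) = -1 := by
      rw [hG]
      exact Fin.snoc_last _ _
    rw [h6, neg_one_smul, neg_add_cancel]
  have h7 := Fintype.linearIndependent_iff.mp h2 (fun j => G j.val) hsum0
  have h8 := h7 ⟨Fin.last (m + 1), by rw [hs']; exact Finset.mem_insert_self _ _⟩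
  rw [hG] at h8
  simp only [Fin.snoc_last] at h8
  norm_num at h8

lemma Mm_det_ne_zero (hp : p ∈ UsetQ qt) (hcfg : p ∈ genConfigP ℝ (Vm m) (m + 1) (m + 2)) :
    (Mm qt p).det ≠ 0 := by
  rw [Mm, Matrix.det_mul, Matrix.det_diagonal]
  exact mul_ne_zero (Bm_det_ne_zero qt p hp hcfg)
    (Finset.prod_ne_zero_iff.mpr fun i _ => cv_ne_zero qt p hp hcfg i)

lemma Nm_mul_Mm (hp : p ∈ UsetQ qt) (hcfg : p ∈ genConfigP ℝ (Vm m) (m + 1) (m + 2)) :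
    Nm qt p * Mm qt p = 1 := by
  rw [Nm, Matrix.smul_mul, Matrix.adjugate_mul, smul_smul,
    inv_mul_cancel₀ (Mm_det_ne_zero qt p hp hcfg), one_smul]

lemma Mm_mul_Nm (hp : p ∈ UsetQ qt) (hcfg : p ∈ genConfigP ℝ (Vm m) (m + 1) (m + 2)) :
    Mm qt p * Nm qt p = 1 := by
  rw [Nm, Matrix.mul_smul, Matrix.mul_adjugate, smul_smul,
    inv_mul_cancel₀ (Mm_det_ne_zero qt p hp hcfg), one_smul]

lemma Ti_Tl (hp : p ∈ UsetQ qt) (hcfg : p ∈ genConfigP ℝ (Vm m) (m + 1) (m + 2)) (v : Vm m) :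
    Ti qt p (Tl qt p v) = v := by
  rw [Ti, Tl, toEuclideanLin_mul_apply, Nm_mul_Mm qt p hp hcfg, toEuclideanLin_one]

lemma Tl_Ti (hp : p ∈ UsetQ qt) (hcfg : p ∈ genConfigP ℝ (Vm m) (m + 1) (m + 2)) (v : Vm m) :
    Tl qt p (Ti qt p v) = v := by
  rw [Ti, Tl, toEuclideanLin_mul_apply, Mm_mul_Nm qt p hp hcfg, toEuclideanLin_one]

lemma Tl_ne_zero (hp : p ∈ UsetQ qt) (hcfg : p ∈ genConfigP ℝ (Vm m) (m + 1) (m + 2))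
    {v : Vm m} (hv : v ≠ 0) : Tl qt p v ≠ 0 := fun h =>
  hv (by rw [← Ti_Tl qt p hp hcfg v, h, map_zero])

lemma Ti_ne_zero (hp : p ∈ UsetQ qt) (hcfg : p ∈ genConfigP ℝ (Vm m) (m + 1) (m + 2))
    {v : Vm m} (hv : v ≠ 0) : Ti qt p v ≠ 0 := fun h =>
  hv (by rw [← Tl_Ti qt p hp hcfg v, h, map_zero])

lemma Tl_single (k : Fin (m + 1)) :
    Tl qt p (EuclideanSpace.single k 1) = cv qt p k • vv qt p k.castSucc := by
  ext j
  rw [Tl, toEuclideanLin_coord]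
  have h1 : ∀ i, Mm qt p j i * (EuclideanSpace.single k (1 : ℝ)) i
      = if i = k then Mm qt p j i else 0 := by
    intro i
    rw [EuclideanSpace.single_apply]
    by_cases h : i = k <;> simp [h]
  rw [Finset.sum_congr rfl fun i _ => h1 i, Finset.sum_ite_eq' Finset.univ k _]
  simp only [Finset.mem_univ, if_true]
  have h2 : Mm qt p j k = Bm qt p j k * cv qt p k := Matrix.mul_diagonal _ _ _ _
  rw [h2]
  have h3 : (cv qt p k • vv qt p k.castSucc) j = cv qt p k * vv qt p k.castSucc j := rfl
  rw [h3]
  have h4 : Bm qt p j k = vv qt p k.castSucc j := rfl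
  rw [h4, mul_comm]

lemma Tl_ones (hp : p ∈ UsetQ qt) (hcfg : p ∈ genConfigP ℝ (Vm m) (m + 1) (m + 2)) :
    Tl qt p (∑ j, EuclideanSpace.single j (1 : ℝ)) = vv qt p (Fin.last (m + 1)) := by
  rw [map_sum]
  have h : ∀ k ∈ Finset.univ, Tl qt p (EuclideanSpace.single k (1 : ℝ))
      = cv qt p k • vv qt p k.castSucc := fun k _ => Tl_single qt p k
  rw [Finset.sum_congr rfl h]
  exact sum_cv_vv qt p hp hcfg

lemma mk_Tl_qBase (hp : p ∈ UsetQ qt) (hcfg : p ∈ genConfigP ℝ (Vm m) (m + 1) (m + 2))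
    (j : Fin (m + 2)) :
    p j = Projectivization.mk ℝ (Tl qt p ((qBase m j).rep))
      (Tl_ne_zero qt p hp hcfg (rep_nonzero _)) := by
  induction j using Fin.lastCases with
  | last =>
    obtain ⟨a, ha⟩ := exists_smul_eq_mk_rep ℝ (∑ j, EuclideanSpace.single j (1 : ℝ))
      (sum_single_ne_zero' m)
    have hrep : (qBase m (Fin.last (m + 1))).rep
        = (a : ℝ) • ∑ j, EuclideanSpace.single j (1 : ℝ) := by
      rw [qBase, Fin.snoc_last]
      rw [← ha]
      rfl
    rw [← mk_vv qt p hp (Fin.last (m + 1)), mk_eq_mk_iff']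
    refine ⟨(a : ℝ)⁻¹, ?_⟩
    rw [hrep, _root_.map_smul, Tl_ones qt p hp hcfg, smul_smul, inv_mul_cancel₀ a.ne_zero, one_smul]
  | cast k =>
    obtain ⟨a, ha⟩ := exists_smul_eq_mk_rep ℝ (EuclideanSpace.single k (1 : ℝ))
      (single_ne_zero' k)
    have hrep : (qBase m k.castSucc).rep = (a : ℝ) • EuclideanSpace.single k (1 : ℝ) := by
      rw [qBase, Fin.snoc_castSucc]
      rw [← ha]
      rfl
    rw [← mk_vv qt p hp k.castSucc, mk_eq_mk_iff']
    refine ⟨((a : ℝ) * cv qt p k)⁻¹, ?_⟩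
    rw [hrep, _root_.map_smul, Tl_single qt p k, smul_smul, smul_smul, mul_assoc,
      inv_mul_cancel₀ (mul_ne_zero a.ne_zero (cv_ne_zero qt p hp hcfg k)), one_smul]

/-- The transported linear equivalence. -/
def Teq (hp : p ∈ UsetQ qt) (hcfg : p ∈ genConfigP ℝ (Vm m) (m + 1) (m + 2)) :
    Vm m ≃ₗ[ℝ] Vm m :=
  LinearEquiv.ofLinear (Tl qt p) (Ti qt p)
    (LinearMap.ext (Tl_Ti qt p hp hcfg)) (LinearMap.ext (Ti_Tl qt p hp hcfg))

lemma transport (hp : p ∈ UsetQ qt) (hcfg : p ∈ genConfigP ℝ (Vm m) (m + 1) (m + 2))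
    {w : Vm m} (hw : w ≠ 0) {X : ℙ ℝ (Vm m)}
    (hX : X = Projectivization.mk ℝ (Tl qt p w) (Tl_ne_zero qt p hp hcfg hw))
    (s : Finset (Fin (m + 2))) :
    (Projectivization.Independent fun o : Option s =>
      Option.elim o X (fun i => p i.val)) ↔
    (Projectivization.Independent fun o : Option s =>
      Option.elim o (Projectivization.mk ℝ w hw) (fun i => qBase m i.val)) := by
  have hgL : ∀ o : Option s, (Option.elim o (Tl qt p w)
      (fun i => Tl qt p ((qBase m i.val).rep))) ≠ 0 := fun o => by
    cases o with
    | none => exact Tl_ne_zero qt p hp hcfg hw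
    | some i => exact Tl_ne_zero qt p hp hcfg (rep_nonzero _)
  have hgR : ∀ o : Option s, (Option.elim o w (fun i => (qBase m i.val).rep)) ≠ 0 := fun o => by
    cases o with
    | none => exact hw
    | some i => exact rep_nonzero _
  rw [independent_iff_of_reps hgL (fun o => by
    cases o with
    | none => exact hX
    | some i => exact mk_Tl_qBase qt p hp hcfg i.val)]
  rw [independent_iff_of_reps hgR (fun o => by
    cases o with
    | none => rfl
    | some i => exact (mk_rep _).symm)]
  have he : (fun o : Option s => Option.elim o (Tl qt p w)
      (fun i => Tl qt p ((qBase m i.val).rep)))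
      = fun o : Option s => (Teq qt p hp hcfg)
        ((fun o : Option s => Option.elim o w (fun i => (qBase m i.val).rep)) o) :=
    funext fun o => by cases o <;> rfl
  rw [he, linearIndependent_equiv_map]

/-- Independence of the fibre families coming from a configuration. -/
lemma indep_option_of_config {z : Fin (m + 3) → ℙ ℝ (Vm m)}
    (hz : z ∈ genConfigP ℝ (Vm m) (m + 1) (m + 3)) {s : Finset (Fin (m + 2))}
    (hs : s.card = m) :
    Projectivization.Independent fun o : Option s =>
      Option.elim o (z (Fin.last (m + 2))) (fun i => z i.val.castSucc) := by
  set t : Finset (Fin (m + 3)) := insert (Fin.last (m + 2)) (s.map Fin.castSuccEmb) with ht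
  have hlast : Fin.last (m + 2) ∉ s.map Fin.castSuccEmb := by
    simp only [Finset.mem_map]
    rintro ⟨k, _, hkk⟩
    exact (Fin.castSucc_lt_last k).ne hkk
  have hcard : t.card = m + 1 := by
    rw [ht, Finset.card_insert_of_notMem hlast, Finset.card_map, hs]
  have h1 := hz t hcard
  set e : Option s → t := fun o => match o with
    | none => ⟨Fin.last (m + 2), Finset.mem_insert_self _ _⟩
    | some i => ⟨i.val.castSucc, Finset.mem_insert_of_mem (Finset.mem_map_of_mem _ i.2)⟩
    with hedef
  have he : Function.Injective e := by
    rintro (_ | i) (_ | j) hij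
    · rfl
    · exfalso
      have := congrArg Subtype.val hij
      exact (Fin.castSucc_lt_last j.val).ne (by simpa [hedef] using this.symm)
    · exfalso
      have := congrArg Subtype.val hij
      exact (Fin.castSucc_lt_last i.val).ne (by simpa [hedef] using this)
    · have := congrArg Subtype.val hij
      simp only [hedef] at this
      have h2 := Fin.castSucc_injective _ this
      rw [Option.some_inj]
      exact Subtype.ext h2
  have h3 := independent_comp h1 e he
  have hfe : (fun o : Option s =>
      Option.elim o (z (Fin.last (m + 2))) (fun i => z i.val.castSucc))
      = fun o : Option s => (fun i : t => z i.val) (e o) :=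
    funext fun o => by cases o <;> rfl
  rw [hfe]
  exact h3

/-- Appending a point outside all the `Q`-hyperplanes to a configuration gives a
configuration. -/
lemma snoc_mem_config {pp : Fin (m + 2) → ℙ ℝ (Vm m)}
    (hcfg : pp ∈ genConfigP ℝ (Vm m) (m + 1) (m + 2)) {X : ℙ ℝ (Vm m)}
    (hX : ∀ s : Finset (Fin (m + 2)), s.card = m →
      Projectivization.Independent fun o : Option s =>
        Option.elim o X (fun i => pp i.val)) :
    Fin.snoc pp X ∈ genConfigP ℝ (Vm m) (m + 1) (m + 3) := by
  intro t hcard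
  by_cases hlast : Fin.last (m + 2) ∈ t
  · set s : Finset (Fin (m + 2)) :=
      (t.erase (Fin.last (m + 2))).preimage Fin.castSucc
        ((Fin.castSucc_injective _).injOn) with hsdef
    have hmap : s.map Fin.castSuccEmb = t.erase (Fin.last (m + 2)) := by
      ext j
      simp only [Finset.mem_map, hsdef, Finset.mem_preimage]
      constructor
      · rintro ⟨k, hk, rfl⟩
        exact hk
      · intro hj
        have hne : j ≠ Fin.last (m + 2) := (Finset.mem_erase.mp hj).1
        refine ⟨j.castPred hne, ?_, ?_⟩
        · rwa [Fin.castSucc_castPred]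
        · exact Fin.castSucc_castPred j hne
    have hscard : s.card = m := by
      have h1 := congrArg Finset.card hmap
      rw [Finset.card_map] at h1
      rw [h1, Finset.card_erase_of_mem hlast, hcard]
      simp
    have h1 := hX s hscard
    set e : t → Option s := fun j =>
      if h : j.val = Fin.last (m + 2) then none
      else some ⟨j.val.castPred h, by
        rw [hsdef]
        rw [Finset.mem_preimage, Fin.castSucc_castPred]
        exact Finset.mem_erase.mpr ⟨h, j.2⟩⟩ with hedef
    have he : Function.Injective e := by
      intro a b hab
      by_cases ha : a.val = Fin.last (m + 2) <;> by_cases hb : b.val = Fin.last (m + 2)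
      · exact Subtype.ext (ha.trans hb.symm)
      · exfalso
        rw [hedef] at hab
        simp only [ha, hb, dif_pos, dif_neg, not_false_iff] at hab
        cases hab
      · exfalso
        rw [hedef] at hab
        simp only [ha, hb, dif_pos, dif_neg, not_false_iff] at hab
        cases hab
      · rw [hedef] at hab
        simp only [ha, hb, dif_neg, not_false_iff, Option.some_inj] at hab
        have h2 := congrArg Subtype.val hab
        simp only at h2
        apply Subtype.ext
        have h3 := congrArg Fin.castSucc h2
        rwa [Fin.castSucc_castPred, Fin.castSucc_castPred] at h3
    have h4 := independent_comp h1 e he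
    have hfe : (fun j : t => (Fin.snoc pp X : Fin (m + 3) → ℙ ℝ (Vm m)) j.val)
        = fun j : t => (fun o : Option s => Option.elim o X (fun i => pp i.val)) (e j) := by
      funext j
      by_cases h : j.val = Fin.last (m + 2)
      · rw [hedef]
        simp only [h, dif_pos]
        exact Fin.snoc_last _ _
      · rw [hedef]
        simp only [h, dif_neg, not_false_iff]
        have h5 : j.val = (j.val.castPred h).castSucc := (Fin.castSucc_castPred j.val h).symm
        conv_lhs => rw [h5]
        exact Fin.snoc_castSucc _ _ _
    rw [hfe]
    exact h4
  · set s : Finset (Fin (m + 2)) :=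
      t.preimage Fin.castSucc ((Fin.castSucc_injective _).injOn) with hsdef
    have hmap : s.map Fin.castSuccEmb = t := by
      ext j
      simp only [Finset.mem_map, hsdef, Finset.mem_preimage]
      constructor
      · rintro ⟨k, hk, rfl⟩
        exact hk
      · intro hj
        have hne : j ≠ Fin.last (m + 2) := fun h => hlast (h ▸ hj)
        refine ⟨j.castPred hne, ?_, ?_⟩
        · rwa [Fin.castSucc_castPred]
        · exact Fin.castSucc_castPred j hne
    have hscard : s.card = m + 1 := by
      have h1 := congrArg Finset.card hmap
      rw [Finset.card_map] at h1
      rw [h1, hcard]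
    have h1 := hcfg s hscard
    set e : t → s := fun j =>
      ⟨j.val.castPred (fun h => hlast (h ▸ j.2)), by
        rw [hsdef, Finset.mem_preimage, Fin.castSucc_castPred]
        exact j.2⟩ with hedef
    have he : Function.Injective e := by
      intro a b hab
      have h2 := congrArg Subtype.val hab
      rw [hedef] at h2
      simp only at h2
      apply Subtype.ext
      have h3 := congrArg Fin.castSucc h2
      rwa [Fin.castSucc_castPred, Fin.castSucc_castPred] at h3
    have h4 := independent_comp h1 e he
    have hfe : (fun j : t => (Fin.snoc pp X : Fin (m + 3) → ℙ ℝ (Vm m)) j.val)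
        = fun j : t => (fun i : s => pp i.val) (e j) := by
      funext j
      have h5 : j.val = (j.val.castPred (fun h => hlast (h ▸ j.2))).castSucc :=
        (Fin.castSucc_castPred _ _).symm
      conv_lhs => rw [h5]
      exact Fin.snoc_castSucc _ _ _
    rw [hfe]
    exact h4

/-- The "good" subset of tuples. -/
def GoodSet : Set (Fin (m + 2) → ℙ ℝ (Vm m)) :=
  UsetQ qt ∩ genConfigP ℝ (Vm m) (m + 1) (m + 2)

lemma continuous_vv (i : Fin (m + 2)) :
    Continuous fun u : GoodSet qt => vv qt u.val i := by
  rw [continuous_iff_continuousAt]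
  intro u
  have h1 : ContinuousAt (fun u : GoodSet qt => u.val i) u :=
    ((continuous_apply i).comp continuous_subtype_val).continuousAt
  have h2 := ContinuousAt.comp (x := u) (continuousAt_secf _ (u.2.1 i)) h1
  exact h2

lemma continuous_Bm : Continuous fun u : GoodSet qt => Bm qt u.val :=
  continuous_matrix fun j i => ((continuous_apply j).comp (PiLp.continuous_ofLp (p := 2) (β := fun _ : Fin (m + 1) => ℝ))).comp (continuous_vv qt i.castSucc)

lemma continuous_wv : Continuous fun u : GoodSet qt => wv qt u.val :=
  continuous_pi fun j => ((continuous_apply j).comp (PiLp.continuous_ofLp (p := 2) (β := fun _ : Fin (m + 1) => ℝ))).comp (continuous_vv qt (Fin.last (m + 1)))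

lemma continuous_cv : Continuous fun u : GoodSet qt => cv qt u.val :=
  (((continuous_Bm qt).matrix_det).inv₀ fun u => Bm_det_ne_zero qt u.val u.2.1 u.2.2).smul
    ((continuous_Bm qt).matrix_cramer (continuous_wv qt))

lemma continuous_Mm : Continuous fun u : GoodSet qt => Mm qt u.val :=
  (continuous_Bm qt).matrix_mul ((continuous_cv qt).matrix_diagonal)

lemma continuous_Nm : Continuous fun u : GoodSet qt => Nm qt u.val :=
  (((continuous_Mm qt).matrix_det).inv₀ fun u => Mm_det_ne_zero qt u.val u.2.1 u.2.2).smul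
    (continuous_Mm qt).matrix_adjugate

lemma continuous_Nm' {X : Type*} [TopologicalSpace X] {f : X → (Fin (m + 2) → ℙ ℝ (Vm m))}
    (hf : Continuous f) (hU : ∀ x, f x ∈ UsetQ qt)
    (hC : ∀ x, f x ∈ genConfigP ℝ (Vm m) (m + 1) (m + 2)) :
    Continuous fun x => Nm qt (f x) := by
  have hρ : Continuous fun x => (⟨f x, hU x, hC x⟩ : GoodSet qt) :=
    hf.subtype_mk fun x => ⟨hU x, hC x⟩
  have h2 := (continuous_Nm qt).comp hρ
  exact h2

lemma continuous_Mm' {X : Type*} [TopologicalSpace X] {f : X → (Fin (m + 2) → ℙ ℝ (Vm m))}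
    (hf : Continuous f) (hU : ∀ x, f x ∈ UsetQ qt)
    (hC : ∀ x, f x ∈ genConfigP ℝ (Vm m) (m + 1) (m + 2)) :
    Continuous fun x => Mm qt (f x) := by
  have hρ : Continuous fun x => (⟨f x, hU x, hC x⟩ : GoodSet qt) :=
    hf.subtype_mk fun x => ⟨hU x, hC x⟩
  have h2 := (continuous_Mm qt).comp hρ
  exact h2

lemma continuous_euclideanLin_pair {k : ℕ} :
    Continuous fun z : Matrix (Fin k) (Fin k) ℝ × EuclideanSpace ℝ (Fin k) =>
      Matrix.toEuclideanLin z.1 z.2 := by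
  refine (PiLp.continuous_toLp (p := 2) (β := fun _ : Fin k => ℝ)).comp
    (f := fun z : Matrix (Fin k) (Fin k) ℝ × EuclideanSpace ℝ (Fin k) =>
      (Matrix.toEuclideanLin z.1 z.2).ofLp) ?_
  apply continuous_pi
  intro j
  have h : ∀ z : Matrix (Fin k) (Fin k) ℝ × EuclideanSpace ℝ (Fin k),
      Matrix.toEuclideanLin z.1 z.2 j = ∑ i, z.1 j i * z.2 i :=
    fun z => toEuclideanLin_coord _ _ _
  simp only [h]
  exact continuous_finset_sum _ fun i _ =>
    (((continuous_apply i).comp ((continuous_apply j).comp continuous_fst)).mul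
      ((continuous_apply i).comp ((PiLp.continuous_ofLp (p := 2) (β := fun _ : Fin k => ℝ)).comp
        continuous_snd)))

/-- The base open set, as a set of configurations. -/
def UU : Set (genConfigP ℝ (Vm m) (m + 1) (m + 2)) := Subtype.val ⁻¹' UsetQ qt

/-- The fibre. -/
def FF (m : ℕ) : Set (ℙ ℝ (Vm m)) := (QSetP m (m + 2) (qBase m))ᶜ

/-- The domain of the trivialization. -/
def DD : Set (genConfigP ℝ (Vm m) (m + 1) (m + 3)) := forgetLastP ⁻¹' UU qt

lemma isOpen_UU : IsOpen (UU qt) := (isOpen_UsetQ qt).preimage continuous_subtype_val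

lemma ptU {x : genConfigP ℝ (Vm m) (m + 1) (m + 3)} (hx : x ∈ DD qt) :
    (fun i : Fin (m + 2) => x.val i.castSucc) ∈ UsetQ qt := hx

lemma ptC (x : genConfigP ℝ (Vm m) (m + 1) (m + 3)) :
    (fun i : Fin (m + 2) => x.val i.castSucc) ∈ genConfigP ℝ (Vm m) (m + 1) (m + 2) :=
  forget_memP x.2

lemma fwd_mem_FF {x : genConfigP ℝ (Vm m) (m + 1) (m + 3)} (hx : x ∈ DD qt) :
    Projectivization.mk ℝ
      (Ti qt (fun i : Fin (m + 2) => x.val i.castSucc) ((x.val (Fin.last (m + 2))).rep))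
      (Ti_ne_zero qt _ (ptU qt hx) (ptC x) (rep_nonzero _)) ∈ FF m := by
  intro hmem
  obtain ⟨s, hs, hnot⟩ := hmem
  apply hnot
  have hXeq : x.val (Fin.last (m + 2)) = Projectivization.mk ℝ
      (Tl qt (fun i : Fin (m + 2) => x.val i.castSucc)
        (Ti qt (fun i : Fin (m + 2) => x.val i.castSucc) ((x.val (Fin.last (m + 2))).rep)))
      (Tl_ne_zero qt _ (ptU qt hx) (ptC x)
        (Ti_ne_zero qt _ (ptU qt hx) (ptC x) (rep_nonzero _))) := by
    have h1 : Tl qt (fun i : Fin (m + 2) => x.val i.castSucc)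
        (Ti qt (fun i : Fin (m + 2) => x.val i.castSucc) ((x.val (Fin.last (m + 2))).rep))
        = (x.val (Fin.last (m + 2))).rep := Tl_Ti qt _ (ptU qt hx) (ptC x) _
    conv_lhs => rw [← mk_rep (x.val (Fin.last (m + 2)))]
    rw [mk_eq_mk_iff']
    exact ⟨1, by rw [one_smul, h1]⟩
  have h2 := (transport qt (fun i : Fin (m + 2) => x.val i.castSucc) (ptU qt hx) (ptC x)
      (Ti_ne_zero qt _ (ptU qt hx) (ptC x) (rep_nonzero _)) hXeq s).mp
      (indep_option_of_config x.2 hs)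
  exact h2

lemma snoc_mem_config' {pp : Fin (m + 2) → ℙ ℝ (Vm m)} (hppU : pp ∈ UsetQ qt)
    (hppC : pp ∈ genConfigP ℝ (Vm m) (m + 1) (m + 2)) {y : ℙ ℝ (Vm m)} (hy : y ∈ FF m) :
    Fin.snoc pp (Projectivization.mk ℝ (Tl qt pp y.rep)
        (Tl_ne_zero qt pp hppU hppC (rep_nonzero y)))
      ∈ genConfigP ℝ (Vm m) (m + 1) (m + 3) := by
  apply snoc_mem_config hppC
  intro s hs
  refine (transport qt pp hppU hppC (rep_nonzero y) rfl s).mpr ?_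
  have h1 : (fun o : Option s => Option.elim o
        (Projectivization.mk ℝ y.rep (rep_nonzero y)) (fun i => qBase m i.val))
      = fun o : Option s => Option.elim o y (fun i => qBase m i.val) :=
    funext fun o => by cases o with
      | none => exact mk_rep y
      | some i => rfl
  rw [h1]
  exact not_not.mp (fun hnot => hy ⟨s, hs, hnot⟩)

lemma forget_snoc (pp : Fin (m + 2) → ℙ ℝ (Vm m)) (X : ℙ ℝ (Vm m)) :
    (fun i : Fin (m + 2) => (Fin.snoc pp X : Fin (m + 3) → ℙ ℝ (Vm m)) i.castSucc) = pp :=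
  funext fun i => Fin.snoc_castSucc _ _ _

/-- The forward map of the trivialization. -/
def fwdF (x : DD qt) : UU qt × FF m :=
  (⟨forgetLastP x.val, x.2⟩,
    ⟨Projectivization.mk ℝ
      (Ti qt (fun i : Fin (m + 2) => x.val.val i.castSucc)
        ((x.val.val (Fin.last (m + 2))).rep))
      (Ti_ne_zero qt _ (ptU qt x.2) (ptC x.val) (rep_nonzero _)),
      fwd_mem_FF qt x.2⟩)

lemma snoc_forget_mem (u : UU qt) (X : ℙ ℝ (Vm m))
    (hc : Fin.snoc u.val.val X ∈ genConfigP ℝ (Vm m) (m + 1) (m + 3)) :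
    (⟨Fin.snoc u.val.val X, hc⟩ : genConfigP ℝ (Vm m) (m + 1) (m + 3)) ∈ DD qt := by
  refine Set.mem_preimage.mpr (Set.mem_preimage.mpr ?_)
  have h1 : (forgetLastP (⟨Fin.snoc u.val.val X, hc⟩ :
      genConfigP ℝ (Vm m) (m + 1) (m + 3))).val = u.val.val := forget_snoc _ _
  rw [h1]
  exact u.2

/-- The inverse map of the trivialization. -/
def invF (z : UU qt × FF m) : DD qt :=
  ⟨⟨Fin.snoc z.1.val.val (Projectivization.mk ℝ (Tl qt z.1.val.val z.2.val.rep)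
      (Tl_ne_zero qt _ z.1.2 z.1.val.2 (rep_nonzero _))),
    snoc_mem_config' qt z.1.2 z.1.val.2 z.2.2⟩,
    snoc_forget_mem qt z.1 _ _⟩

lemma invF_fwdF (x : DD qt) : invF qt (fwdF qt x) = x := by
  apply Subtype.ext
  apply Subtype.ext
  funext j
  induction j using Fin.lastCases with
  | cast i =>
    show (Fin.snoc _ _ : Fin (m + 3) → ℙ ℝ (Vm m)) i.castSucc = x.val.val i.castSucc
    rw [Fin.snoc_castSucc]
    rfl
  | last =>
    show (Fin.snoc _ _ : Fin (m + 3) → ℙ ℝ (Vm m)) (Fin.last (m + 2))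
      = x.val.val (Fin.last (m + 2))
    rw [Fin.snoc_last]
    set pp : Fin (m + 2) → ℙ ℝ (Vm m) := fun i => x.val.val i.castSucc with hpp
    set u : Vm m := (x.val.val (Fin.last (m + 2))).rep with hu
    obtain ⟨a, ha⟩ := exists_smul_eq_mk_rep ℝ (Ti qt pp u)
      (Ti_ne_zero qt _ (ptU qt x.2) (ptC x.val) (rep_nonzero _))
    have h1 : Tl qt pp ((Projectivization.mk ℝ (Ti qt pp u)
        (Ti_ne_zero qt _ (ptU qt x.2) (ptC x.val) (rep_nonzero _))).rep) = (a : ℝ) • u := by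
      rw [← ha, Units.smul_def, _root_.map_smul, Tl_Ti qt pp (ptU qt x.2) (ptC x.val)]
    conv_rhs => rw [← mk_rep (x.val.val (Fin.last (m + 2)))]
    rw [mk_eq_mk_iff']
    exact ⟨(a : ℝ), h1.symm⟩

lemma fwdF_invF (z : UU qt × FF m) : fwdF qt (invF qt z) = z := by
  have hppe : (fun i : Fin (m + 2) => (invF qt z).val.val i.castSucc) = z.1.val.val :=
    forget_snoc _ _
  apply Prod.ext
  · apply Subtype.ext
    apply Subtype.ext
    exact hppe
  · apply Subtype.ext
    show Projectivization.mk ℝ _ _ = z.2.val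
    set Y : ℙ ℝ (Vm m) := Projectivization.mk ℝ (Tl qt z.1.val.val z.2.val.rep)
      (Tl_ne_zero qt _ z.1.2 z.1.val.2 (rep_nonzero _)) with hY
    obtain ⟨b, hb⟩ := exists_smul_eq_mk_rep ℝ (Tl qt z.1.val.val z.2.val.rep)
      (Tl_ne_zero qt _ z.1.2 z.1.val.2 (rep_nonzero _))
    have hlast' : (invF qt z).val.val (Fin.last (m + 2)) = Y := by
      show (Fin.snoc z.1.val.val Y : Fin (m + 3) → ℙ ℝ (Vm m)) (Fin.last (m + 2)) = Y
      exact Fin.snoc_last _ _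
    have hchain : Ti qt (fun i : Fin (m + 2) => (invF qt z).val.val i.castSucc)
        (((invF qt z).val.val (Fin.last (m + 2))).rep) = (b : ℝ) • z.2.val.rep := by
      rw [hppe, hlast', ← hb, Units.smul_def, _root_.map_smul,
        Ti_Tl qt _ z.1.2 z.1.val.2]
    conv_rhs => rw [← mk_rep z.2.val]
    rw [mk_eq_mk_iff']
    exact ⟨(b : ℝ), hchain.symm⟩

set_option maxHeartbeats 1000000 in
lemma continuous_fwdF : Continuous (fwdF qt) := by
  apply Continuous.prodMk
  · have h0 : Continuous fun x : DD qt => (fun i : Fin (m + 2) => x.val.val i.castSucc) :=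
      continuous_pi fun i => (continuous_apply (Fin.castSucc i)).comp
        (continuous_subtype_val.comp continuous_subtype_val)
    have h1 : Continuous fun x : DD qt => forgetLastP x.val :=
      Continuous.subtype_mk h0 fun x => forget_memP x.val.2
    exact Continuous.subtype_mk h1 fun x => x.2
  · apply Continuous.subtype_mk (p := (· ∈ FF m))
    rw [continuous_iff_continuousAt]
    intro x₀
    set ψ : Vm m →L[ℝ] ℝ := innerSL ℝ ((x₀.val.val (Fin.last (m + 2))).rep) with hψ
    have hlastc : Continuous fun x : DD qt => x.val.val (Fin.last (m + 2)) :=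
      (continuous_apply _).comp (continuous_subtype_val.comp continuous_subtype_val)
    have hSopen : IsOpen ((fun x : DD qt => x.val.val (Fin.last (m + 2))) ⁻¹' Dset ψ) :=
      (isOpen_Dset ψ).preimage hlastc
    have hx₀ : x₀ ∈ (fun x : DD qt => x.val.val (Fin.last (m + 2))) ⁻¹' Dset ψ := by
      show ψ ((x₀.val.val (Fin.last (m + 2))).rep) ≠ 0
      rw [hψ]
      simp only [innerSL_apply_apply]
      exact inner_self_ne_zero.mpr (rep_nonzero _)
    have h0' : Continuous fun x : DD qt => (fun i : Fin (m + 2) => x.val.val i.castSucc) :=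
      continuous_pi fun i => (continuous_apply (Fin.castSucc i)).comp
        (continuous_subtype_val.comp continuous_subtype_val)
    have hN : Continuous fun x : DD qt =>
        Nm qt (fun i => x.val.val i.castSucc) :=
      continuous_Nm' qt h0' (fun x => ptU qt x.2) (fun x => ptC x.val)
    refine continuousAt_mk_local hSopen hx₀ (G := fun x : DD qt =>
      Matrix.toEuclideanLin (Nm qt (fun i => x.val.val i.castSucc))
        (secf ψ (x.val.val (Fin.last (m + 2))))) ?_ ?_ ?_
    · intro x hx
      have hB : ContinuousAt (fun x : DD qt => secf ψ (x.val.val (Fin.last (m + 2)))) x :=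
        ContinuousAt.comp (x := x) (continuousAt_secf ψ hx) hlastc.continuousAt
      have h2 := ContinuousAt.comp (x := x) (continuous_euclideanLin_pair.continuousAt)
        ((hN.continuousAt).prodMk hB)
      exact h2.continuousWithinAt
    · intro x hx
      exact Ti_ne_zero qt _ (ptU qt x.2) (ptC x.val) (secf_ne_zero hx)
    · intro x hx
      refine (mk_eq_mk_iff' ..).mpr ?_
      refine ⟨ψ ((x.val.val (Fin.last (m + 2))).rep), ?_⟩
      show ψ ((x.val.val (Fin.last (m + 2))).rep) •
        Ti qt (fun i => x.val.val i.castSucc) (secf ψ (x.val.val (Fin.last (m + 2))))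
        = Ti qt (fun i => x.val.val i.castSucc) ((x.val.val (Fin.last (m + 2))).rep)
      rw [secf_rep, _root_.map_smul, smul_smul, mul_inv_cancel₀ hx, one_smul]

set_option maxHeartbeats 1000000 in
lemma continuous_invF : Continuous (invF qt) := by
  apply Continuous.subtype_mk (p := (· ∈ DD qt))
  apply Continuous.subtype_mk
  apply continuous_pi
  intro j
  induction j using Fin.lastCases with
  | cast i =>
    simp only [Fin.snoc_castSucc]
    exact (continuous_apply i).comp
      (continuous_subtype_val.comp (continuous_subtype_val.comp continuous_fst))
  | last =>
    simp only [Fin.snoc_last]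
    rw [continuous_iff_continuousAt]
    intro z₀
    set ψ : Vm m →L[ℝ] ℝ := innerSL ℝ ((z₀.2.val).rep) with hψ
    have hsndc : Continuous fun z : UU qt × FF m => z.2.val :=
      continuous_subtype_val.comp continuous_snd
    have hSopen : IsOpen ((fun z : UU qt × FF m => z.2.val) ⁻¹' Dset ψ) :=
      (isOpen_Dset ψ).preimage hsndc
    have hz₀ : z₀ ∈ (fun z : UU qt × FF m => z.2.val) ⁻¹' Dset ψ := by
      show ψ ((z₀.2.val).rep) ≠ 0
      rw [hψ]
      simp only [innerSL_apply_apply]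
      exact inner_self_ne_zero.mpr (rep_nonzero _)
    have h0' : Continuous fun z : UU qt × FF m => z.1.val.val :=
      continuous_subtype_val.comp (continuous_subtype_val.comp continuous_fst)
    have hM : Continuous fun z : UU qt × FF m => Mm qt z.1.val.val :=
      continuous_Mm' qt h0' (fun z => z.1.2) (fun z => z.1.val.2)
    refine continuousAt_mk_local hSopen hz₀ (G := fun z : UU qt × FF m =>
      Matrix.toEuclideanLin (Mm qt z.1.val.val) (secf ψ z.2.val)) ?_ ?_ ?_
    · intro z hz
      have hB : ContinuousAt (fun z : UU qt × FF m => secf ψ z.2.val) z :=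
        ContinuousAt.comp (x := z) (continuousAt_secf ψ hz) hsndc.continuousAt
      have h2 := ContinuousAt.comp (x := z) (continuous_euclideanLin_pair.continuousAt)
        ((hM.continuousAt).prodMk hB)
      exact h2.continuousWithinAt
    · intro z hz
      exact Tl_ne_zero qt _ z.1.2 z.1.val.2 (secf_ne_zero hz)
    · intro z hz
      refine (mk_eq_mk_iff' ..).mpr ?_
      refine ⟨ψ ((z.2.val).rep), ?_⟩
      show ψ ((z.2.val).rep) • Tl qt z.1.val.val (secf ψ z.2.val)
        = Tl qt z.1.val.val ((z.2.val).rep)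
      rw [secf_rep, _root_.map_smul, smul_smul, mul_inv_cancel₀ hz, one_smul]

end Main

end Proj9

/-- for `m ≥ 1`, the projection `π : W_{m+1,m+3}(ℝP^m) → W_{m+1,m+2}(ℝP^m)`
forgetting the last entry is a locally trivial fiber bundle with fiber
`ℝP^m − Q_{m,m+2}(ℝP^m)_q` where `q = ([e_1],...,[e_{m+1}],[e_1+...+e_{m+1}])`. -/
theorem forgetLast_isFiberBundle_proj (m : ℕ) (hm : 1 ≤ m)
    (q : genConfigP ℝ (EuclideanSpace ℝ (Fin (m + 1))) (m + 1) (m + 2)) :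
    ∃ U : Set (genConfigP ℝ (EuclideanSpace ℝ (Fin (m + 1))) (m + 1) (m + 2)),
      IsOpen U ∧ q ∈ U ∧
      ∃ h : (forgetLastP ⁻¹' U) ≃ₜ
          U × ((QSetP m (m + 2) (qBase m))ᶜ : Set (ℙ ℝ (EuclideanSpace ℝ (Fin (m + 1))))),
        ∀ x, ((h x).1 : genConfigP ℝ (EuclideanSpace ℝ (Fin (m + 1))) (m + 1) (m + 2)) =
          forgetLastP x.val := by
  classical
  refine ⟨Proj9.UU q.val, Proj9.isOpen_UU q.val, Proj9.mem_UsetQ_self q.val, ?_⟩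
  refine ⟨{ toFun := Proj9.fwdF q.val
            invFun := Proj9.invF q.val
            left_inv := Proj9.invF_fwdF q.val
            right_inv := Proj9.fwdF_invF q.val
            continuous_toFun := Proj9.continuous_fwdF q.val
            continuous_invFun := Proj9.continuous_invF q.val }, ?_⟩
  intro x
  rfl
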